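/- Let 2 ≤ s ≤ r, k ≥ 1 and n_1 ≤ n_2 ≤ ... ≤ n_r, where n_1 ≥ s³k + sr if s ≤ r−2, n_1 ≥ s³k² + sr if s = r−1, and n_1 ≥ k if s = r. Then the maximum number of edges in a subhypergraph of K^{(s)}_{n_1,...,n_r} containing no matching of size k equals (k−1) ∑_{A ⊆ [2,r], |A| = s−1} ∏_{i∈A} n_i. -/

import Mathlib

/-- `H` (a family of finite edge sets) contains a matching of size `k`:
`k` pairwise disjoint edges. -/
def hasMatching {α : Type*} [DecidableEq α] (H : Finset (Finset α)) (k : ℕ) : Prop :=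
  ∃ M ⊆ H, M.card = k ∧ (M : Set (Finset α)).Pairwise Disjoint

/-- The edge set of the complete `r`-partite `s`-uniform hypergraph with parts
`V i = Fin (n i)`: all `s`-sets meeting each part in at most one vertex. -/
def crossEdges (r s : ℕ) (n : Fin r → ℕ) : Finset (Finset ((i : Fin r) × Fin (n i))) :=
  Finset.univ.filter fun S =>
    S.card = s ∧ ∀ i : Fin r, (S.filter fun v => v.1 = i).card ≤ 1

/-- `T` is a copy of `K_r^{(s)}` in the `s`-graph `H`: it is a transversal
(one vertex in each part) all of whose `s`-subsets are edges of `H`. -/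
def isKrCopy (r s : ℕ) (n : Fin r → ℕ) (H : Finset (Finset ((i : Fin r) × Fin (n i))))
    (T : Finset ((i : Fin r) × Fin (n i))) : Prop :=
  (∀ i : Fin r, (T.filter fun v => v.1 = i).card = 1) ∧ ∀ S ∈ T.powersetCard s, S ∈ H

/-- `H` contains `k` pairwise vertex-disjoint copies of `K_r^{(s)}`. -/
def hasKDisjointKr (r s k : ℕ) (n : Fin r → ℕ)
    (H : Finset (Finset ((i : Fin r) × Fin (n i)))) : Prop :=
  ∃ C : Finset (Finset ((i : Fin r) × Fin (n i))), C.card = k ∧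
    (∀ T ∈ C, isKrCopy r s n H T) ∧
    (C : Set (Finset ((i : Fin r) × Fin (n i)))).Pairwise Disjoint

/-- The number of `s`-cliques of the graph with edge set `H`
(an `s`-clique is an `s`-set all of whose `2`-subsets are edges). -/
def cliqueCount (r s : ℕ) (n : Fin r → ℕ)
    (H : Finset (Finset ((i : Fin r) × Fin (n i)))) : ℕ :=
  (Finset.univ.filter fun S : Finset ((i : Fin r) × Fin (n i)) =>
    S.card = s ∧ ∀ e ∈ S.powersetCard 2, e ∈ H).card

/-!
Parts are indexed from `0`, the smallest part being `V_0`, and `e_j = esymmTail r n j` is the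
elementary symmetric polynomial of degree `j` in `n 1, …, n (r-1)`. The bound `(k - 1) e_{s-1}` is
attained by all edges through `k - 1` fixed vertices of `V_0`.

For `s = r` the edges are the transversals `y`. Those with the same offsets `y i - y 0 (mod n i)`,
`i ≥ 1`, form a matching, so each of the `e_{r-1}` offset classes holds at most `k - 1` edges.

For `s < r` take a maximum matching `M`, so `|M| ≤ k - 1`, with vertex set `W`. Call a vertex `v`
of `W` rich if more than `|M| (s - 1)` edges meet `W` exactly in `v` and pairwise meet only in `v`.
Exchange arguments show that every edge contains a rich vertex of some `e ∈ M`, or meets some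
`e ∈ M` without rich vertices. A rich vertex has degree at most `e_{s-1}`; the vertices of an edge
without rich vertices have degree sum at most `(2|M| + 1) s² e_{s-2}`, since codegrees are at most
`e_{s-2}`. Double counting gives `(r - s + 1) n 0 e_{s-2} ≤ (s - 1) e_{s-1}`, and with
`n 0 ≥ s³ k` each edge of `M` accounts for at most `e_{s-1}` edges.
-/

open Finset

section Matching

variable {α : Type*}

def IsMatching (M : Finset (Finset α)) : Prop := (M : Set (Finset α)).Pairwise Disjoint

lemma IsMatching.subset {N N' : Finset (Finset α)} (hN : IsMatching N) (h : N' ⊆ N) :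
    IsMatching N' :=
  Set.Pairwise.mono (coe_subset.mpr h) hN

lemma IsMatching.insert [DecidableEq α] {N : Finset (Finset α)} (hN : IsMatching N) {g : Finset α}
    (hg : ∀ f ∈ N, g ≠ f → Disjoint g f) : IsMatching (insert g N) := by
  unfold IsMatching
  rw [coe_insert, Set.pairwise_insert_of_symm]
  exact ⟨hN, hg⟩

lemma IsMatching.union [DecidableEq α] {N N' : Finset (Finset α)} (hN : IsMatching N)
    (hN' : IsMatching N') (h : ∀ f ∈ N, ∀ f' ∈ N', Disjoint f f') : IsMatching (N ∪ N') := by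
  unfold IsMatching
  rw [coe_union, Set.pairwise_union_of_symm]
  exact ⟨hN, hN', fun f hf f' hf' _ => h f hf f' hf'⟩

structure IsMaximumMatching (H M : Finset (Finset α)) : Prop where
  subset : M ⊆ H
  isMatching : IsMatching M
  card_le : ∀ N ⊆ H, IsMatching N → N.card ≤ M.card

lemma exists_isMaximumMatching (H : Finset (Finset α)) : ∃ M, IsMaximumMatching H M := by
  classical
  obtain ⟨M, hM, hmax⟩ := exists_max_image (H.powerset.filter IsMatching) card
    ⟨∅, mem_filter.mpr ⟨empty_mem_powerset H, by simp [IsMatching]⟩⟩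
  rw [mem_filter, mem_powerset] at hM
  exact ⟨M, hM.1, hM.2, fun N hNH hN => hmax N (mem_filter.mpr ⟨mem_powerset.mpr hNH, hN⟩)⟩

variable [DecidableEq α]

lemma not_hasMatching_of_inter_nonempty {H : Finset (Finset α)} {X : Finset α} {k : ℕ}
    (hX : X.card < k) (hH : ∀ f ∈ H, (f ∩ X).Nonempty) : ¬ hasMatching H k := by
  rintro ⟨M, hMH, hMk, hM⟩
  have hmeet : ∀ f ∈ M, ∃ x ∈ X, x ∈ f := fun f hf => by
    obtain ⟨x, hx⟩ := hH f (hMH hf)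
    exact ⟨x, (mem_inter.mp hx).2, (mem_inter.mp hx).1⟩
  obtain ⟨f₀, hf₀⟩ := card_pos.mp (show 0 < M.card by omega)
  have : Nonempty α := ⟨(hmeet f₀ hf₀).choose⟩
  choose! p hpX hpf using hmeet
  obtain ⟨f, hf, f', hf', hne, hpp⟩ :=
    exists_ne_map_eq_of_card_lt_of_maps_to (hMk ▸ hX) (f := p) fun f hf => hpX f hf
  exact disjoint_left.mp (hM hf hf' hne) (hpf f hf) (hpp ▸ hpf f' hf')

lemma IsMatching.disjoint_of_inter_eq_singleton {M : Finset (Finset α)} (hM : IsMatching M)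
    {e e' : Finset α} (he : e ∈ M) (he' : e' ∈ M) (hne : e ≠ e') {f : Finset α} {v : α}
    (hf : f ∩ M.biUnion id = {v}) (hv : v ∈ e) : Disjoint f e' := by
  refine disjoint_left.mpr fun x hxf hxe' => ?_
  have : x ∈ f ∩ M.biUnion id := mem_inter.mpr ⟨hxf, mem_biUnion.mpr ⟨e', he', hxe'⟩⟩
  rw [hf, mem_singleton] at this
  exact disjoint_left.mp (hM he he' hne) (this ▸ hv) hxe'

namespace IsMaximumMatching

variable {H M : Finset (Finset α)}

lemma card_lt_of_not_hasMatching (hM : IsMaximumMatching H M) {k : ℕ}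
    (hno : ¬ hasMatching H k) : M.card < k := by
  by_contra! hk
  obtain ⟨N, hNM, hNk⟩ := exists_subset_card_eq hk
  exact hno ⟨N, hNM.trans hM.subset, hNk, hM.isMatching.subset hNM⟩

/-- `(M \ E) ∪ N` is a matching in `H`. -/
lemma card_le_of_disjoint_sdiff (hM : IsMaximumMatching H M) {E N : Finset (Finset α)}
    (hE : E ⊆ M) (hNH : N ⊆ H) (hN : IsMatching N) (hne : ∀ f ∈ N, f.Nonempty)
    (hdisj : ∀ f ∈ N, ∀ e ∈ M \ E, Disjoint f e) : N.card ≤ E.card := by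
  have hunion : (M \ E ∪ N).card = M.card - E.card + N.card := by
    rw [card_union_of_disjoint, card_sdiff_of_subset hE]
    refine disjoint_right.mpr fun f hfN hfM => ?_
    obtain ⟨x, hx⟩ := hne f hfN
    exact disjoint_left.mp (hdisj f hfN f hfM) hx hx
  have := hM.card_le (M \ E ∪ N) (union_subset (sdiff_subset.trans hM.subset) hNH)
    ((hM.isMatching.subset sdiff_subset).union hN
      fun e he f hf => (hdisj f hf e he).symm)
  have := card_le_card hE
  omega

lemma inter_biUnion_nonempty (hM : IsMaximumMatching H M) {g : Finset α} (hg : g ∈ H)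
    (hg₀ : g.Nonempty) : (g ∩ M.biUnion id).Nonempty := by
  by_contra h
  have := hM.card_le_of_disjoint_sdiff (E := ∅) (N := {g}) (empty_subset _)
    (singleton_subset_iff.mpr hg) (by simp [IsMatching]) (by simpa using hg₀) ?_
  · simp at this
  · simp only [mem_singleton, sdiff_empty, forall_eq]
    intro e he
    refine disjoint_left.mpr fun x hxg hxe => h ⟨x, mem_inter.mpr ⟨hxg, ?_⟩⟩
    exact mem_biUnion.mpr ⟨e, he, hxe⟩

end IsMaximumMatching

def privateEdges (H : Finset (Finset α)) (W : Finset α) (v : α) : Finset (Finset α) :=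
  H.filter fun g => g ∩ W = {v}

lemma mem_privateEdges {H : Finset (Finset α)} {W : Finset α} {v : α} {g : Finset α} :
    g ∈ privateEdges H W v ↔ g ∈ H ∧ g ∩ W = {v} :=
  mem_filter

lemma mem_of_mem_privateEdges {H : Finset (Finset α)} {W : Finset α} {v : α} {g : Finset α}
    (hg : g ∈ privateEdges H W v) : v ∈ g ∧ v ∈ W :=
  mem_inter.mp ((mem_privateEdges.mp hg).2 ▸ mem_singleton_self v)

/-- Otherwise `f` and `g` could replace `e` in `M`. -/
lemma IsMaximumMatching.inter_erase_nonempty {H M : Finset (Finset α)}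
    (hM : IsMaximumMatching H M) {e : Finset α} (he : e ∈ M) {v w : α} (hv : v ∈ e)
    (hw : w ∈ e) (hvw : v ≠ w) {f g : Finset α} (hf : f ∈ privateEdges H (M.biUnion id) v)
    (hg : g ∈ privateEdges H (M.biUnion id) w) : (g ∩ f.erase v).Nonempty := by
  obtain ⟨hfH, hfW⟩ := mem_privateEdges.mp hf
  obtain ⟨hgH, hgW⟩ := mem_privateEdges.mp hg
  by_contra h
  have hfg : Disjoint f g := by
    refine disjoint_left.mpr fun x hxf hxg => ?_
    by_cases hxv : x = v
    · subst hxv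
      have : x ∈ g ∩ M.biUnion id := mem_inter.mpr ⟨hxg, mem_biUnion.mpr ⟨e, he, hv⟩⟩
      rw [hgW, mem_singleton] at this
      exact hvw this
    · exact h ⟨x, mem_inter.mpr ⟨hxg, mem_erase.mpr ⟨hxv, hxf⟩⟩⟩
  have hne : f ≠ g := by
    rintro rfl
    exact hvw (singleton_injective (hfW.symm.trans hgW))
  have := hM.card_le_of_disjoint_sdiff (E := {e}) (N := {f, g}) (singleton_subset_iff.mpr he)
    (insert_subset hfH (singleton_subset_iff.mpr hgH)) ?_ ?_ ?_
  · rw [card_pair hne, card_singleton] at this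
    omega
  · exact (show IsMatching {g} by simp [IsMatching]).insert fun f' hf' _ => by
      rw [mem_singleton] at hf'
      exact hf' ▸ hfg
  · simp only [mem_insert, mem_singleton, forall_eq_or_imp, forall_eq]
    exact ⟨⟨v, (mem_of_mem_privateEdges hf).1⟩, ⟨w, (mem_of_mem_privateEdges hg).1⟩⟩
  · simp only [mem_insert, mem_singleton, forall_eq_or_imp, forall_eq, mem_sdiff]
    have hM' := hM.isMatching
    exact ⟨fun e' he' => hM'.disjoint_of_inter_eq_singleton he he'.1 (Ne.symm he'.2) hfW hv,
      fun e' he' => hM'.disjoint_of_inter_eq_singleton he he'.1 (Ne.symm he'.2) hgW hw⟩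

def IsSunflowerAt (v : α) (T : Finset (Finset α)) : Prop :=
  (T : Set (Finset α)).Pairwise fun f f' => f ∩ f' ⊆ {v}

def HasSunflowerAt (F : Finset (Finset α)) (v : α) (t : ℕ) : Prop :=
  ∃ T ⊆ F, IsSunflowerAt v T ∧ t ≤ T.card

lemma IsSunflowerAt.exists_disjoint {v : α} {T : Finset (Finset α)} (hT : IsSunflowerAt v T)
    {B : Finset α} (hvB : v ∉ B) (hBT : B.card < T.card) : ∃ f ∈ T, Disjoint f B := by
  by_contra! h
  have hmeet : ∀ f ∈ T, ∃ x ∈ B, x ∈ f := fun f hf => by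
    obtain ⟨x, hxf, hxB⟩ := not_disjoint_iff.mp (h f hf)
    exact ⟨x, hxB, hxf⟩
  obtain ⟨f₀, hf₀⟩ := card_pos.mp (Nat.zero_lt_of_lt hBT)
  have : Nonempty α := ⟨(hmeet f₀ hf₀).choose⟩
  choose! p hpB hpf using hmeet
  obtain ⟨f, hf, f', hf', hne, hpp⟩ :=
    exists_ne_map_eq_of_card_lt_of_maps_to hBT (f := p) fun f hf => hpB f hf
  have := hT hf hf' hne (mem_inter.mpr ⟨hpf f hf, hpp ▸ hpf f' hf'⟩)
  exact hvB (mem_singleton.mp this ▸ hpB f hf)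

/-- The points of a maximal sunflower at `v` other than `v` meet every member of `F`. -/
lemma exists_hittingSet_of_not_hasSunflowerAt {F : Finset (Finset α)} {v : α} {s t : ℕ}
    (hs : 2 ≤ s) (hF : ∀ f ∈ F, v ∈ f ∧ f.card = s) (hpoor : ¬ HasSunflowerAt F v t) :
    ∃ U : Finset α, v ∉ U ∧ U.card ≤ (t - 1) * (s - 1) ∧ ∀ g ∈ F, (g ∩ U).Nonempty := by
  classical
  obtain ⟨T, hT, hmax⟩ := exists_max_image (F.powerset.filter (IsSunflowerAt v)) card
    ⟨∅, mem_filter.mpr ⟨empty_mem_powerset F, by simp [IsSunflowerAt]⟩⟩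
  rw [mem_filter, mem_powerset] at hT
  have hTt : T.card < t := by
    by_contra! h
    exact hpoor ⟨T, hT.1, hT.2, h⟩
  refine ⟨T.biUnion (·.erase v), by simp, ?_, fun g hg => ?_⟩
  · calc (T.biUnion (·.erase v)).card ≤ T.card * (s - 1) :=
          card_biUnion_le_card_mul _ _ _ fun f hf => by
            rw [card_erase_of_mem (hF f (hT.1 hf)).1, (hF f (hT.1 hf)).2]
      _ ≤ (t - 1) * (s - 1) := Nat.mul_le_mul_right _ (by omega)
  by_contra hgU
  have hpetal : ∀ f ∈ T, g ∩ f ⊆ {v} := fun f hf x hx => by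
    rw [mem_inter] at hx
    by_contra hxv
    refine hgU ⟨x, mem_inter.mpr ⟨hx.1, mem_biUnion.mpr ⟨f, hf, mem_erase.mpr ⟨?_, hx.2⟩⟩⟩⟩
    exact fun h => hxv (mem_singleton.mpr h)
  have hgT : g ∉ T := fun hgT => by
    obtain ⟨x, hx⟩ : (g.erase v).Nonempty := by
      rw [← card_pos, card_erase_of_mem (hF g hg).1, (hF g hg).2]
      omega
    exact (mem_erase.mp hx).1 (mem_singleton.mp
      (hpetal g hgT (mem_inter.mpr ⟨mem_of_mem_erase hx, mem_of_mem_erase hx⟩)))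
  have hins : IsSunflowerAt v (insert g T) := by
    unfold IsSunflowerAt
    rw [coe_insert, Set.pairwise_insert]
    refine ⟨hT.2, fun f hf _ => ⟨hpetal f hf, ?_⟩⟩
    rw [inter_comm]
    exact hpetal f hf
  have := hmax (insert g T) (mem_filter.mpr ⟨mem_powerset.mpr (insert_subset hg hT.1), hins⟩)
  rw [card_insert_of_notMem hgT] at this
  omega

lemma card_sdiff_of_mem_privateEdges {H : Finset (Finset α)} {W : Finset α} {v : α} {s : ℕ}
    (hH : ∀ f ∈ H, f.card = s) {g : Finset α} (hg : g ∈ privateEdges H W v) :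
    (g \ W).card = s - 1 := by
  rw [mem_privateEdges] at hg
  have := card_sdiff_add_card_inter g W
  rw [hg.2, card_singleton, hH g hg.1] at this
  omega

lemma disjoint_of_mem_privateEdges {H : Finset (Finset α)} {W : Finset α} {v v' : α}
    (hvv' : v ≠ v') {f f' : Finset α} (hf : f ∈ privateEdges H W v)
    (hf' : f' ∈ privateEdges H W v') (hff' : Disjoint f (f' \ W)) : Disjoint f f' := by
  refine disjoint_left.mpr fun x hxf hxf' => ?_
  by_cases hxW : x ∈ W
  · have h : x ∈ f ∩ W := mem_inter.mpr ⟨hxf, hxW⟩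
    have h' : x ∈ f' ∩ W := mem_inter.mpr ⟨hxf', hxW⟩
    rw [(mem_privateEdges.mp hf).2, mem_singleton] at h
    rw [(mem_privateEdges.mp hf').2, mem_singleton] at h'
    exact hvv' (h.symm.trans h')
  · exact disjoint_left.mp hff' hxf (mem_sdiff.mpr ⟨hxf', hxW⟩)

/-- Chosen one at a time: `B` and the points outside `W` of the edges chosen so far are fewer
than `t`, so they miss some petal of the next sunflower. -/
lemma exists_pairwiseDisjoint_privateEdges {ι : Type*} [DecidableEq ι]
    {H : Finset (Finset α)} {W B : Finset α} {s t : ℕ} (hH : ∀ f ∈ H, f.card = s)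
    (hBW : Disjoint B W) (c : ι → α) (E : Finset ι) (hcW : ∀ e ∈ E, c e ∈ W)
    (hc : Set.InjOn c E) (hrich : ∀ e ∈ E, HasSunflowerAt (privateEdges H W (c e)) (c e) t)
    (hbudget : B.card + E.card * (s - 1) < t + (s - 1)) :
    ∃ φ : ι → Finset α, (∀ e ∈ E, φ e ∈ privateEdges H W (c e) ∧ Disjoint (φ e) B) ∧
      (E : Set ι).PairwiseDisjoint φ := by
  induction E using Finset.induction_on with
  | empty => exact ⟨fun _ => ∅, by simp, by simp⟩
  | insert e R heR ih =>
    rw [card_insert_of_notMem heR, add_mul] at hbudget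
    obtain ⟨φ, hφ, hφdisj⟩ := ih (fun e' he' => hcW e' (mem_insert_of_mem he'))
      (hc.mono (by simp)) (fun e' he' => hrich e' (mem_insert_of_mem he')) (by omega)
    set B' := B ∪ R.biUnion fun e' => φ e' \ W
    have hB' : B'.card < t := by
      have := card_biUnion_le_card_mul R (fun e' => φ e' \ W) (s - 1) fun e' he' =>
        (card_sdiff_of_mem_privateEdges hH (hφ e' he').1).le
      have : B'.card ≤ B.card + (R.biUnion fun e' => φ e' \ W).card := card_union_le _ _
      omega
    have hB'W : Disjoint B' W :=
      disjoint_union_left.mpr ⟨hBW, (disjoint_biUnion_left _ _ _).mpr fun _ _ => sdiff_disjoint⟩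
    obtain ⟨T, hTP, hT, htT⟩ := hrich e (mem_insert_self e R)
    obtain ⟨f, hfT, hfB'⟩ := hT.exists_disjoint
      (fun h => disjoint_left.mp hB'W h (hcW e (mem_insert_self e R))) (hB'.trans_le htT)
    have hupd : ∀ e' ∈ R, Function.update φ e f e' = φ e' := fun e' he' =>
      Function.update_of_ne (fun h => heR (by rwa [← h])) _ _
    refine ⟨Function.update φ e f, fun e' he' => ?_, ?_⟩
    · rcases mem_insert.mp he' with rfl | he'
      · rw [Function.update_self]
        exact ⟨hTP hfT, disjoint_of_subset_right subset_union_left hfB'⟩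
      · rw [hupd e' he']
        exact hφ e' he'
    · rw [coe_insert]
      refine Set.PairwiseDisjoint.insert_of_notMem (fun x hx y hy hxy => ?_) heR fun e' he' => ?_
      · simp only [Function.onFun, hupd x hx, hupd y hy]
        exact hφdisj hx hy hxy
      · rw [Function.update_self, hupd e' he']
        have htail : φ e' \ W ⊆ B' := fun x hx => mem_union_right _ (mem_biUnion.mpr ⟨e', he', hx⟩)
        refine disjoint_of_mem_privateEdges (fun h => heR ?_) (hTP hfT) (hφ e' he').1
          (disjoint_of_subset_right htail hfB')
        rwa [hc (mem_insert_self e R) (mem_insert_of_mem he') h]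

lemma IsMatching.image_of_pairwiseDisjoint {ι : Type*} {E : Finset ι}
    {φ : ι → Finset α} (h : (E : Set ι).PairwiseDisjoint φ) : IsMatching (E.image φ) := by
  rintro _ hf _ hf' hne
  obtain ⟨e, he, rfl⟩ := mem_image.mp hf
  obtain ⟨e', he', rfl⟩ := mem_image.mp hf'
  exact h he he' fun h => hne (h ▸ rfl)

lemma card_image_of_pairwiseDisjoint {ι : Type*} {E : Finset ι}
    {φ : ι → Finset α} (h : (E : Set ι).PairwiseDisjoint φ) (hne : ∀ e ∈ E, (φ e).Nonempty) :
    (E.image φ).card = E.card := by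
  refine card_image_of_injOn fun e he e' he' hee' => ?_
  by_contra hne'
  obtain ⟨x, hx⟩ := hne e he
  exact disjoint_left.mp (h he he' hne') hx (hee' ▸ hx)

variable {H M : Finset (Finset α)} {s : ℕ}

/-- `(M \ E) ∪ φ(E) ∪ {g}` would be a larger matching. -/
lemma IsMaximumMatching.false_of_exchange (hM : IsMaximumMatching H M) {E : Finset (Finset α)}
    (hEM : E ⊆ M) {c : Finset α → α} (hce : ∀ e ∈ E, c e ∈ e) {φ : Finset α → Finset α}
    (hφ : ∀ e ∈ E, φ e ∈ privateEdges H (M.biUnion id) (c e))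
    (hφdisj : (E : Set (Finset α)).PairwiseDisjoint φ) {g : Finset α} (hg : g ∈ H)
    (hg₀ : g.Nonempty) (hgφ : ∀ e ∈ E, Disjoint g (φ e)) (hgM : ∀ e ∈ M \ E, Disjoint g e) :
    False := by
  have hφne : ∀ e ∈ E, (φ e).Nonempty := fun e he =>
    ⟨c e, (mem_of_mem_privateEdges (hφ e he)).1⟩
  have hgφ' : g ∉ E.image φ := fun h => by
    obtain ⟨e, he, rfl⟩ := mem_image.mp h
    obtain ⟨x, hx⟩ := hg₀
    exact disjoint_left.mp (hgφ e he) hx hx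
  have := hM.card_le_of_disjoint_sdiff (E := E) (N := insert g (E.image φ)) hEM
    (insert_subset hg fun f hf => by
      obtain ⟨e, he, rfl⟩ := mem_image.mp hf
      exact (mem_privateEdges.mp (hφ e he)).1)
    ((IsMatching.image_of_pairwiseDisjoint hφdisj).insert fun f hf _ => by
      obtain ⟨e, he, rfl⟩ := mem_image.mp hf
      exact hgφ e he)
    (fun f hf => by
      rcases mem_insert.mp hf with rfl | hf
      · exact hg₀
      · obtain ⟨e, he, rfl⟩ := mem_image.mp hf
        exact hφne e he)
    (fun f hf e' he' => by
      rcases mem_insert.mp hf with rfl | hf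
      · exact hgM e' he'
      · obtain ⟨e, he, rfl⟩ := mem_image.mp hf
        obtain ⟨he'M, he'E⟩ := mem_sdiff.mp he'
        exact hM.isMatching.disjoint_of_inter_eq_singleton (hEM he) he'M (fun h => he'E (h ▸ he))
          (mem_privateEdges.mp (hφ e he)).2 (hce e he))
  rw [card_insert_of_notMem hgφ', card_image_of_pairwiseDisjoint hφdisj hφne] at this
  omega

/-- `K e` is either `e` or a vertex of `e` carrying a large sunflower of private edges.
If `g` missed every `K e`, the edges of `M` met by `g` could be traded for disjoint private edges
avoiding `g`, and then `g` could be added. -/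
lemma IsMaximumMatching.exists_inter_nonempty (hM : IsMaximumMatching H M) (hs : 1 ≤ s)
    (hH : ∀ f ∈ H, f.card = s) {K : Finset α → Finset α}
    (hK : ∀ e ∈ M, K e = e ∨ ∃ c ∈ e, K e = {c} ∧
      HasSunflowerAt (privateEdges H (M.biUnion id) c) c (M.card * (s - 1) + 1))
    {g : Finset α} (hg : g ∈ H) : ∃ e ∈ M, (g ∩ K e).Nonempty := by
  by_contra! hgK
  have hgW := hM.inter_biUnion_nonempty hg (card_pos.mp (by rw [hH g hg]; omega))
  set W := M.biUnion id
  set E := M.filter fun e => (g ∩ e).Nonempty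
  have hEM : E ⊆ M := filter_subset _ _
  have hcentre : ∀ e ∈ E, ∃ c ∈ e, K e = {c} ∧
      HasSunflowerAt (privateEdges H W c) c (M.card * (s - 1) + 1) := by
    intro e he
    obtain ⟨heM, hge⟩ := mem_filter.mp he
    refine (hK e heM).resolve_left fun hKe => hge.ne_empty ?_
    rw [← hgK e heM, hKe]
  have : Nonempty α := ⟨hgW.choose⟩
  choose! c hce hKc hrich using hcentre
  have hbudget : (g \ W).card + E.card * (s - 1) < M.card * (s - 1) + 1 + (s - 1) := by
    have hsplit := card_sdiff_add_card_inter g W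
    have := card_pos.mpr hgW
    have := Nat.mul_le_mul_right (s - 1) (card_le_card hEM)
    rw [hH g hg] at hsplit
    omega
  obtain ⟨φ, hφ, hφdisj⟩ := exists_pairwiseDisjoint_privateEdges (W := W) (B := g \ W) hH
    sdiff_disjoint c E (fun e he => mem_biUnion.mpr ⟨e, hEM he, hce e he⟩)
    (fun e he e' he' hee' => by
      by_contra hne
      exact disjoint_left.mp (hM.isMatching (hEM he) (hEM he') hne) (hce e he)
        (hee' ▸ hce e' he'))
    hrich hbudget
  refine hM.false_of_exchange hEM hce (fun e he => (hφ e he).1) hφdisj hg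
    (hgW.mono inter_subset_left) (fun e he => disjoint_left.mpr fun x hxg hxφ => ?_)
    fun e he => disjoint_iff_inter_eq_empty.mpr (not_nonempty_iff_eq_empty.mp
      fun h => (mem_sdiff.mp he).2 (mem_filter.mpr ⟨(mem_sdiff.mp he).1, h⟩))
  by_cases hxW : x ∈ W
  · have : x ∈ φ e ∩ W := mem_inter.mpr ⟨hxφ, hxW⟩
    rw [(mem_privateEdges.mp (hφ e he).1).2, mem_singleton] at this
    have hxK : x ∈ g ∩ K e := mem_inter.mpr ⟨hxg, hKc e he ▸ mem_singleton.mpr this⟩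
    rw [hgK e (hEM he)] at hxK
    exact notMem_empty x hxK
  · exact disjoint_left.mp (hφ e he).2 hxφ (mem_sdiff.mpr ⟨hxg, hxW⟩)

variable {C : ℕ}

lemma card_le_card_mul_of_inter_nonempty {F : Finset (Finset α)} (hFH : F ⊆ H) {v : α}
    {U : Finset α} (hvU : v ∉ U) (hF : ∀ g ∈ F, v ∈ g ∧ (g ∩ U).Nonempty)
    (hcodeg : ∀ v w, v ≠ w → (H.filter fun g => v ∈ g ∧ w ∈ g).card ≤ C) :
    F.card ≤ U.card * C := by
  calc F.card ≤ (U.biUnion fun u => H.filter fun g => v ∈ g ∧ u ∈ g).card :=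
        card_le_card fun g hg => by
          obtain ⟨u, hu⟩ := (hF g hg).2
          exact mem_biUnion.mpr ⟨u, (mem_inter.mp hu).2,
            mem_filter.mpr ⟨hFH hg, (hF g hg).1, (mem_inter.mp hu).1⟩⟩
    _ ≤ U.card * C := card_biUnion_le_card_mul _ _ _ fun u hu =>
        hcodeg v u fun h => hvU (h ▸ hu)

lemma card_privateEdges_le_of_not_hasSunflowerAt {W : Finset α} {v : α} {t : ℕ} (hs : 2 ≤ s)
    (hH : ∀ f ∈ H, f.card = s)
    (hcodeg : ∀ v w, v ≠ w → (H.filter fun g => v ∈ g ∧ w ∈ g).card ≤ C)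
    (hpoor : ¬ HasSunflowerAt (privateEdges H W v) v t) :
    (privateEdges H W v).card ≤ (t - 1) * (s - 1) * C := by
  obtain ⟨U, hvU, hU, hhit⟩ := exists_hittingSet_of_not_hasSunflowerAt hs
    (fun g hg => ⟨(mem_of_mem_privateEdges hg).1, hH g (mem_privateEdges.mp hg).1⟩) hpoor
  calc (privateEdges H W v).card ≤ U.card * C :=
        card_le_card_mul_of_inter_nonempty (filter_subset _ _) hvU
          (fun g hg => ⟨(mem_of_mem_privateEdges hg).1, hhit g hg⟩) hcodeg
    _ ≤ (t - 1) * (s - 1) * C := Nat.mul_le_mul_right C hU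

lemma IsMaximumMatching.card_privateEdges_le (hM : IsMaximumMatching H M)
    (hH : ∀ f ∈ H, f.card = s)
    (hcodeg : ∀ v w, v ≠ w → (H.filter fun g => v ∈ g ∧ w ∈ g).card ≤ C)
    {e : Finset α} (he : e ∈ M) {v w : α} (hv : v ∈ e) (hw : w ∈ e) (hvw : v ≠ w)
    {f : Finset α} (hf : f ∈ privateEdges H (M.biUnion id) v) :
    (privateEdges H (M.biUnion id) w).card ≤ (s - 1) * C := by
  have hwf : w ∉ f.erase v := fun hwf => by
    have : w ∈ f ∩ M.biUnion id :=
      mem_inter.mpr ⟨mem_of_mem_erase hwf, mem_biUnion.mpr ⟨e, he, hw⟩⟩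
    rw [(mem_privateEdges.mp hf).2, mem_singleton] at this
    exact hvw this.symm
  calc (privateEdges H (M.biUnion id) w).card ≤ (f.erase v).card * C :=
        card_le_card_mul_of_inter_nonempty (filter_subset _ _) hwf
          (fun g hg => ⟨(mem_of_mem_privateEdges hg).1,
            hM.inter_erase_nonempty he hv hw hvw hf hg⟩) hcodeg
    _ = (s - 1) * C := by
        rw [card_erase_of_mem (mem_of_mem_privateEdges hf).1, hH f (mem_privateEdges.mp hf).1]

lemma IsMaximumMatching.sum_card_privateEdges_le (hM : IsMaximumMatching H M) (hs : 2 ≤ s)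
    (hH : ∀ f ∈ H, f.card = s)
    (hcodeg : ∀ v w, v ≠ w → (H.filter fun g => v ∈ g ∧ w ∈ g).card ≤ C)
    {e : Finset α} (he : e ∈ M)
    (hpoor : ∀ v ∈ e, ¬ HasSunflowerAt (privateEdges H (M.biUnion id) v) v
      (M.card * (s - 1) + 1)) :
    ∑ v ∈ e, (privateEdges H (M.biUnion id) v).card ≤ (M.card + 1) * s ^ 2 * C := by
  by_cases h : ∃ v ∈ e, (privateEdges H (M.biUnion id) v).Nonempty
  swap
  · push Not at h
    simp [sum_eq_zero fun v hv => card_eq_zero.mpr (h v hv)]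
  obtain ⟨v, hv, f, hf⟩ := h
  have hsq : (s - 1) * (s - 1) ≤ s ^ 2 := by
    rw [sq]
    exact Nat.mul_le_mul (Nat.sub_le s 1) (Nat.sub_le s 1)
  calc ∑ u ∈ e, (privateEdges H (M.biUnion id) u).card
      = (privateEdges H (M.biUnion id) v).card +
          ∑ u ∈ e.erase v, (privateEdges H (M.biUnion id) u).card :=
        (add_sum_erase e _ hv).symm
    _ ≤ M.card * (s - 1) * (s - 1) * C + (e.erase v).card * ((s - 1) * C) := by
        refine Nat.add_le_add ?_ (sum_le_card_nsmul _ _ _ fun w hw => ?_)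
        · simpa using card_privateEdges_le_of_not_hasSunflowerAt hs hH hcodeg (hpoor v hv)
        · obtain ⟨hwv, hwe⟩ := mem_erase.mp hw
          exact hM.card_privateEdges_le hH hcodeg he hv hwe (Ne.symm hwv) hf
    _ ≤ (M.card + 1) * s ^ 2 * C := by
        rw [card_erase_of_mem hv, hH e (hM.subset he)]
        calc M.card * (s - 1) * (s - 1) * C + (s - 1) * ((s - 1) * C)
            = (M.card + 1) * ((s - 1) * (s - 1)) * C := by ring
          _ ≤ (M.card + 1) * s ^ 2 * C := by gcongr

lemma card_filter_mem_le_card_privateEdges_add {W : Finset α} {u : α} (hu : u ∈ W)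
    (hcodeg : ∀ v w, v ≠ w → (H.filter fun g => v ∈ g ∧ w ∈ g).card ≤ C) :
    (H.filter (u ∈ ·)).card ≤ (privateEdges H W u).card + W.card * C := by
  set F := H.filter fun g => u ∈ g ∧ (g ∩ W.erase u).Nonempty
  have hsplit : H.filter (u ∈ ·) ⊆ privateEdges H W u ∪ F := by
    intro g hg
    obtain ⟨hgH, hug⟩ := mem_filter.mp hg
    by_cases hgW : g ∩ W = {u}
    · exact mem_union_left _ (mem_privateEdges.mpr ⟨hgH, hgW⟩)
    · obtain ⟨w, hw, hwu⟩ : ∃ w ∈ g ∩ W, w ≠ u := by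
        by_contra! h
        exact hgW (eq_singleton_iff_unique_mem.mpr ⟨mem_inter.mpr ⟨hug, hu⟩, h⟩)
      exact mem_union_right _ (mem_filter.mpr ⟨hgH, hug, w,
        mem_inter.mpr ⟨(mem_inter.mp hw).1, mem_erase.mpr ⟨hwu, (mem_inter.mp hw).2⟩⟩⟩)
  have hF : F.card ≤ (W.erase u).card * C :=
    card_le_card_mul_of_inter_nonempty (filter_subset _ _) (notMem_erase u W)
      (fun g hg => (mem_filter.mp hg).2) hcodeg
  calc (H.filter (u ∈ ·)).card ≤ (privateEdges H W u ∪ F).card := card_le_card hsplit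
    _ ≤ (privateEdges H W u).card + F.card := card_union_le _ _
    _ ≤ (privateEdges H W u).card + W.card * C := by
        have := Nat.mul_le_mul_right C (card_erase_le (s := W) (a := u))
        omega

lemma IsMaximumMatching.sum_card_filter_mem_le (hM : IsMaximumMatching H M) (hs : 2 ≤ s)
    (hH : ∀ f ∈ H, f.card = s)
    (hcodeg : ∀ v w, v ≠ w → (H.filter fun g => v ∈ g ∧ w ∈ g).card ≤ C)
    {e : Finset α} (he : e ∈ M)
    (hpoor : ∀ v ∈ e, ¬ HasSunflowerAt (privateEdges H (M.biUnion id) v) v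
      (M.card * (s - 1) + 1)) :
    ∑ u ∈ e, (H.filter (u ∈ ·)).card ≤ (2 * M.card + 1) * s ^ 2 * C := by
  have hW : (M.biUnion id).card ≤ M.card * s :=
    card_biUnion_le_card_mul _ _ _ fun f hf => (hH f (hM.subset hf)).le
  calc ∑ u ∈ e, (H.filter (u ∈ ·)).card
      ≤ ∑ u ∈ e, ((privateEdges H (M.biUnion id) u).card + (M.biUnion id).card * C) :=
        sum_le_sum fun u hu =>
          card_filter_mem_le_card_privateEdges_add (mem_biUnion.mpr ⟨e, he, hu⟩) hcodeg
    _ ≤ (M.card + 1) * s ^ 2 * C + s * (M.card * s * C) := by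
        rw [sum_add_distrib, sum_const, hH e (hM.subset he), smul_eq_mul]
        exact Nat.add_le_add (hM.sum_card_privateEdges_le hs hH hcodeg he hpoor)
          (Nat.mul_le_mul_left s (Nat.mul_le_mul_right C hW))
    _ = (2 * M.card + 1) * s ^ 2 * C := by ring

/-- Every edge contains a vertex carrying a sunflower of more than `|M| (s - 1)` private edges
(whose degree is at most `D`) or meets an edge of `M` without such a vertex (whose vertices have
degree sum at most `(2 |M| + 1) s² C`). -/
theorem IsMaximumMatching.card_le_card_mul (hM : IsMaximumMatching H M) (hs : 2 ≤ s)
    (hH : ∀ f ∈ H, f.card = s) {D : ℕ} (hdeg : ∀ v, (H.filter (v ∈ ·)).card ≤ D)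
    (hcodeg : ∀ v w, v ≠ w → (H.filter fun g => v ∈ g ∧ w ∈ g).card ≤ C)
    (hD : (2 * M.card + 1) * s ^ 2 * C ≤ D) : H.card ≤ M.card * D := by
  set IsRich := fun v => HasSunflowerAt (privateEdges H (M.biUnion id) v) v (M.card * (s - 1) + 1)
  have hK : ∀ e, ∃ K : Finset α, (K = e ∧ ∀ v ∈ e, ¬ IsRich v) ∨ ∃ c ∈ e, K = {c} ∧ IsRich c := by
    intro e
    by_cases h : ∃ c ∈ e, IsRich c
    · obtain ⟨c, hc, hrich⟩ := h
      exact ⟨{c}, Or.inr ⟨c, hc, rfl, hrich⟩⟩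
    · push Not at h
      exact ⟨e, Or.inl ⟨rfl, h⟩⟩
  choose K hK using hK
  have hcover : H ⊆ M.biUnion fun e => (K e).biUnion fun u => H.filter (u ∈ ·) := by
    intro g hg
    obtain ⟨e, he, u, hu⟩ := hM.exists_inter_nonempty (by omega) hH
      (fun e _ => (hK e).imp And.left id) hg
    exact mem_biUnion.mpr ⟨e, he, mem_biUnion.mpr ⟨u, (mem_inter.mp hu).2,
      mem_filter.mpr ⟨hg, (mem_inter.mp hu).1⟩⟩⟩
  refine (card_le_card hcover).trans (card_biUnion_le_card_mul _ _ _ fun e he => ?_)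
  rcases hK e with ⟨hKe, hpoor⟩ | ⟨c, -, hKe, -⟩
  · rw [hKe]
    exact card_biUnion_le.trans ((hM.sum_card_filter_mem_le hs hH hcodeg he hpoor).trans hD)
  · rw [hKe, singleton_biUnion]
    exact hdeg c

end Matching

section CompleteMultipartite

variable {r s : ℕ} {n : Fin r → ℕ}

abbrev Vertex (r : ℕ) (n : Fin r → ℕ) := (i : Fin r) × Fin (n i)

lemma mem_crossEdges {S : Finset (Vertex r n)} :
    S ∈ crossEdges r s n ↔ S.card = s ∧ Set.InjOn Sigma.fst (S : Set (Vertex r n)) := by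
  simp only [crossEdges, mem_filter, mem_univ, true_and, card_le_one, Set.InjOn, mem_coe]
  constructor
  · rintro ⟨hcard, h⟩
    exact ⟨hcard, fun x hx y hy hxy => h x.1 x ⟨hx, rfl⟩ y ⟨hy, hxy.symm⟩⟩
  · rintro ⟨hcard, h⟩
    exact ⟨hcard, fun i x hx y hy => h hx.1 hy.1 (hx.2.trans hy.2.symm)⟩

def partialTransversals (A : Finset (Fin r)) : Finset (Finset (Vertex r n)) :=
  univ.filter fun U => Set.InjOn Sigma.fst (U : Set (Vertex r n)) ∧ U.image Sigma.fst = A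

lemma image_mk_mem_partialTransversals {A : Finset (Fin r)} (g : (i : A) → Fin (n i)) :
    univ.image (fun i : A => (⟨i.1, g i⟩ : Vertex r n)) ∈ partialTransversals A := by
  simp only [partialTransversals, mem_filter, mem_univ, true_and, coe_image, coe_univ,
    Set.image_univ]
  refine ⟨?_, ?_⟩
  · rintro _ ⟨i, rfl⟩ _ ⟨j, rfl⟩ hij
    obtain rfl : i = j := Subtype.ext hij
    rfl
  · ext i
    simp only [mem_image, mem_univ, true_and]
    exact ⟨fun ⟨_, ⟨j, hj⟩, hji⟩ => hji ▸ hj ▸ j.2, fun hi => ⟨_, ⟨⟨i, hi⟩, rfl⟩, rfl⟩⟩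

lemma exists_image_mk_eq_of_mem_partialTransversals {A : Finset (Fin r)}
    {U : Finset (Vertex r n)} (hU : U ∈ partialTransversals A) :
    ∃ g : (i : A) → Fin (n i), univ.image (fun i : A => (⟨i.1, g i⟩ : Vertex r n)) = U := by
  simp only [partialTransversals, mem_filter, mem_univ, true_and] at hU
  obtain ⟨hinj, hA⟩ := hU
  have hsec : ∀ i ∈ A, ∃ y : Fin (n i), (⟨i, y⟩ : Vertex r n) ∈ U := by
    intro i hi
    rw [← hA] at hi
    obtain ⟨⟨j, y⟩, hy, rfl⟩ := mem_image.mp hi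
    exact ⟨y, hy⟩
  choose g hg using hsec
  refine ⟨fun i => g i.1 i.2, ?_⟩
  ext x
  simp only [mem_image, mem_univ, true_and]
  refine ⟨fun ⟨i, hi⟩ => hi ▸ hg i.1 i.2, fun hx => ?_⟩
  have hxA : x.1 ∈ A := hA ▸ mem_image_of_mem _ hx
  exact ⟨⟨x.1, hxA⟩, hinj (hg _ hxA) hx rfl⟩

lemma card_partialTransversals (A : Finset (Fin r)) :
    (partialTransversals (n := n) A).card = ∏ i ∈ A, n i := by
  have hcard : ∏ i ∈ A, n i = (univ : Finset ((i : A) → Fin (n i))).card := by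
    rw [card_univ, Fintype.card_pi, ← Finset.prod_coe_sort A n]
    simp
  rw [hcard]
  refine (card_nbij (fun g => univ.image fun i : A => (⟨i.1, g i⟩ : Vertex r n))
    (fun g _ => image_mk_mem_partialTransversals g) (fun g _ g' _ h => funext fun i => ?_)
    fun U hU => ?_).symm
  · have hi : (⟨i.1, g i⟩ : Vertex r n) ∈ univ.image fun i : A => (⟨i.1, g' i⟩ : Vertex r n) := by
      simp only at h
      rw [← h]
      exact mem_image_of_mem _ (mem_univ i)
    obtain ⟨j, -, hj⟩ := mem_image.mp hi
    obtain rfl : j = i := Subtype.ext (congrArg Sigma.fst hj)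
    exact (eq_of_heq (Sigma.mk.inj_iff.mp hj).2).symm
  · obtain ⟨g, hg⟩ := exists_image_mk_eq_of_mem_partialTransversals hU
    exact ⟨g, mem_coe.mpr (mem_univ g), hg⟩

lemma mem_biUnion_partialTransversals {Q : Finset (Fin r)} {u : ℕ} {U : Finset (Vertex r n)} :
    U ∈ (Q.powersetCard u).biUnion partialTransversals ↔
      Set.InjOn Sigma.fst (U : Set (Vertex r n)) ∧ U.image Sigma.fst ⊆ Q ∧ U.card = u := by
  simp only [mem_biUnion, partialTransversals, mem_filter, mem_univ, true_and, mem_powersetCard]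
  constructor
  · rintro ⟨A, ⟨hAQ, hAu⟩, hinj, rfl⟩
    exact ⟨hinj, hAQ, card_image_of_injOn hinj ▸ hAu⟩
  · rintro ⟨hinj, hQ, hu⟩
    exact ⟨_, ⟨hQ, card_image_of_injOn hinj ▸ hu⟩, hinj, rfl⟩

lemma card_biUnion_partialTransversals (Q : Finset (Fin r)) (u : ℕ) :
    ((Q.powersetCard u).biUnion (partialTransversals (n := n))).card =
      ∑ A ∈ Q.powersetCard u, ∏ i ∈ A, n i := by
  rw [card_biUnion]
  · exact sum_congr rfl fun A _ => card_partialTransversals A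
  · intro A _ A' _ hAA'
    refine disjoint_left.mpr fun U hU hU' => hAA' ?_
    simp only [partialTransversals, mem_filter] at hU hU'
    exact hU.2.2.symm.trans hU'.2.2

def tailParts (r : ℕ) : Finset (Fin r) := univ.filter fun i => 0 < i.val

def esymmTail (r : ℕ) (n : Fin r → ℕ) (u : ℕ) : ℕ :=
  ∑ A ∈ (tailParts r).powersetCard u, ∏ i ∈ A, n i

lemma mem_tailParts {i : Fin r} : i ∈ tailParts r ↔ 0 < i.val := by
  simp [tailParts]

lemma card_tailParts : (tailParts r).card = r - 1 := by
  rcases Nat.eq_zero_or_pos r with rfl | hr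
  · rfl
  · rw [show tailParts r = univ.erase ⟨0, hr⟩ by
      ext i; simp [mem_tailParts, Fin.ext_iff, Nat.pos_iff_ne_zero]]
    simp

/-- Swapping a missing part with part `0` only increases part sizes. -/
lemma sum_prod_powersetCard_le_esymmTail (hmono : Monotone n) {Q : Finset (Fin r)} {i : Fin r}
    (hi : i ∉ Q) (u : ℕ) :
    ∑ A ∈ Q.powersetCard u, ∏ j ∈ A, n j ≤ esymmTail r n u := by
  set z : Fin r := ⟨0, i.pos⟩
  set σ := Equiv.swap i z
  have hσ : ∀ j ∈ Q, n j ≤ n (σ j) ∧ σ j ∈ tailParts r := by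
    intro j hj
    have hji : j ≠ i := fun h => hi (h ▸ hj)
    rw [mem_tailParts]
    by_cases hjz : j = z
    · subst hjz
      rw [Equiv.swap_apply_right]
      exact ⟨hmono (Nat.zero_le _), Nat.pos_of_ne_zero fun h => hji (Fin.ext h.symm)⟩
    · rw [Equiv.swap_apply_of_ne_of_ne hji hjz]
      exact ⟨le_rfl, Nat.pos_of_ne_zero fun h => hjz (Fin.ext h)⟩
  calc ∑ A ∈ Q.powersetCard u, ∏ j ∈ A, n j
      ≤ ∑ A ∈ Q.powersetCard u, ∏ j ∈ A.map σ.toEmbedding, n j := by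
        refine sum_le_sum fun A hA => ?_
        rw [prod_map]
        exact prod_le_prod' fun j hj => (hσ j ((mem_powersetCard.mp hA).1 hj)).1
    _ = ∑ B ∈ (Q.map σ.toEmbedding).powersetCard u, ∏ j ∈ B, n j := by
        rw [powersetCard_map, sum_map]
        rfl
    _ ≤ esymmTail r n u := by
        refine sum_le_sum_of_subset (powersetCard_mono fun j hj => ?_)
        obtain ⟨j', hj', rfl⟩ := mem_map.mp hj
        exact (hσ j' hj').2

lemma card_filter_superset_le (hmono : Monotone n) {T : Finset (Vertex r n)} (hT : T.Nonempty) :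
    ((crossEdges r s n).filter (T ⊆ ·)).card ≤ esymmTail r n (s - T.card) := by
  set Q := univ \ T.image Sigma.fst
  obtain ⟨x, hx⟩ := hT
  calc ((crossEdges r s n).filter (T ⊆ ·)).card
      ≤ ((Q.powersetCard (s - T.card)).biUnion partialTransversals).card := by
        refine card_le_card_of_injOn (· \ T) (fun S hS => ?_) (fun S hS S' hS' h => ?_)
        · simp only [coe_filter, Set.mem_ofPred_eq, mem_crossEdges] at hS
          obtain ⟨⟨hcard, hinj⟩, hTS⟩ := hS
          rw [mem_coe, mem_biUnion_partialTransversals]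
          refine ⟨hinj.mono (by simp), fun i hi => ?_, by rw [card_sdiff_of_subset hTS, hcard]⟩
          obtain ⟨y, hy, rfl⟩ := mem_image.mp hi
          simp only [Q, mem_sdiff, mem_univ, mem_image, true_and, not_exists, not_and]
          intro z hz hzy
          exact (mem_sdiff.mp hy).2 (hinj (hTS hz) (mem_sdiff.mp hy).1 hzy ▸ hz)
        · simp only [coe_filter, Set.mem_ofPred_eq] at hS hS'
          rw [← sdiff_union_of_subset hS.2, ← sdiff_union_of_subset hS'.2]
          exact congrArg (· ∪ T) h
    _ = ∑ A ∈ Q.powersetCard (s - T.card), ∏ i ∈ A, n i := card_biUnion_partialTransversals _ _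
    _ ≤ esymmTail r n (s - T.card) :=
        sum_prod_powersetCard_le_esymmTail hmono (i := x.1)
          (by simpa [Q] using ⟨x.2, hx⟩) _

lemma card_filter_mem_crossEdges_le (hmono : Monotone n) (v : Vertex r n) :
    ((crossEdges r s n).filter (v ∈ ·)).card ≤ esymmTail r n (s - 1) := by
  simpa using card_filter_superset_le (s := s) hmono (singleton_nonempty v)

lemma card_filter_mem_mem_crossEdges_le (hmono : Monotone n) {v w : Vertex r n} (hvw : v ≠ w) :
    ((crossEdges r s n).filter fun S => v ∈ S ∧ w ∈ S).card ≤ esymmTail r n (s - 2) := by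
  simpa [insert_subset_iff, card_pair hvw] using
    card_filter_superset_le (s := s) hmono (insert_nonempty v {w})

/-- Double counting of the pairs `A ⊂ B` of part sets with `|B \ A| = 1`. -/
lemma mul_esymmTail_le (hmono : Monotone n) (hr : 0 < r) (u : ℕ) :
    (r - 1 - u) * (n ⟨0, hr⟩ * esymmTail r n u) ≤ (u + 1) * esymmTail r n (u + 1) := by
  set P := tailParts r
  have hlower : ∀ A ∈ P.powersetCard u,
      (r - 1 - u) * (n ⟨0, hr⟩ * ∏ i ∈ A, n i) ≤ ∑ j ∈ P \ A, ∏ i ∈ insert j A, n i := by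
    intro A hA
    obtain ⟨hAP, hAu⟩ := mem_powersetCard.mp hA
    rw [← card_tailParts, ← hAu, ← card_sdiff_of_subset hAP, ← smul_eq_mul, ← sum_const]
    refine sum_le_sum fun j hj => ?_
    rw [prod_insert (mem_sdiff.mp hj).2]
    exact Nat.mul_le_mul_right _ (hmono (Nat.zero_le _))
  have hswap : ∑ A ∈ P.powersetCard u, ∑ j ∈ P \ A, ∏ i ∈ insert j A, n i =
      ∑ B ∈ P.powersetCard (u + 1), ∑ _j ∈ B, ∏ i ∈ B, n i := by
    rw [sum_sigma', sum_sigma']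
    refine sum_nbij' (fun x => ⟨insert x.2 x.1, x.2⟩) (fun y => ⟨y.1.erase y.2, y.2⟩)
      ?_ ?_ ?_ ?_ fun _ _ => rfl
    · rintro ⟨A, j⟩ hx
      simp only [mem_sigma, mem_powersetCard, mem_sdiff] at hx ⊢
      exact ⟨⟨insert_subset hx.2.1 hx.1.1, by rw [card_insert_of_notMem hx.2.2, hx.1.2]⟩,
        mem_insert_self _ _⟩
    · rintro ⟨B, j⟩ hy
      simp only [mem_sigma, mem_powersetCard, mem_sdiff] at hy ⊢
      exact ⟨⟨(erase_subset _ _).trans hy.1.1, by rw [card_erase_of_mem hy.2, hy.1.2]; rfl⟩,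
        hy.1.1 hy.2, notMem_erase _ _⟩
    · rintro ⟨A, j⟩ hx
      simp only [mem_sigma, mem_sdiff] at hx
      simp [erase_insert hx.2.2]
    · rintro ⟨B, j⟩ hy
      simp only [mem_sigma] at hy
      simp [insert_erase hy.2]
  calc (r - 1 - u) * (n ⟨0, hr⟩ * esymmTail r n u)
      = ∑ A ∈ P.powersetCard u, (r - 1 - u) * (n ⟨0, hr⟩ * ∏ i ∈ A, n i) := by
        rw [esymmTail, mul_sum, mul_sum]
    _ ≤ ∑ A ∈ P.powersetCard u, ∑ j ∈ P \ A, ∏ i ∈ insert j A, n i := sum_le_sum hlower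
    _ = (u + 1) * esymmTail r n (u + 1) := by
        rw [hswap, esymmTail, mul_sum]
        refine sum_congr rfl fun B hB => ?_
        rw [sum_const, (mem_powersetCard.mp hB).2, smul_eq_mul]

/-- The extremal family: all edges through one of `k - 1` fixed vertices of part `0`. -/
lemma exists_not_hasMatching_card_eq (hr : 0 < r) {k : ℕ} (hk : 1 ≤ k)
    (hkn : k - 1 ≤ n ⟨0, hr⟩) (hs : 1 ≤ s) :
    ∃ H ⊆ crossEdges r s n, ¬ hasMatching H k ∧ H.card = (k - 1) * esymmTail r n (s - 1) := by
  set z : Fin r := ⟨0, hr⟩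
  set a : Fin (k - 1) → Vertex r n := fun j => ⟨z, Fin.castLE hkn j⟩
  set PT := ((tailParts r).powersetCard (s - 1)).biUnion (partialTransversals (n := n))
  have hPT : ∀ U ∈ PT, Set.InjOn Sigma.fst (U : Set (Vertex r n)) ∧ U.card = s - 1 ∧
      ∀ x ∈ U, x.1 ≠ z := by
    intro U hU
    obtain ⟨hinj, hsub, hcard⟩ := mem_biUnion_partialTransversals.mp hU
    refine ⟨hinj, hcard, fun x hx hxz => ?_⟩
    have := mem_tailParts.mp (hsub (mem_image_of_mem _ hx))
    simp [hxz, z] at this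
  have ha : ∀ j, ∀ U ∈ PT, a j ∉ U := fun j U hU h => (hPT U hU).2.2 _ h rfl
  refine ⟨(univ ×ˢ PT).image fun p => insert (a p.1) p.2, ?_, ?_, ?_⟩
  · intro S hS
    obtain ⟨⟨j, U⟩, hp, rfl⟩ := mem_image.mp hS
    obtain ⟨hinj, hcard, hz⟩ := hPT U (mem_product.mp hp).2
    rw [mem_crossEdges, card_insert_of_notMem (ha j U (mem_product.mp hp).2), hcard,
      coe_insert, Set.injOn_insert (ha j U (mem_product.mp hp).2)]
    refine ⟨by omega, hinj, ?_⟩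
    rintro ⟨x, hx, hxz⟩
    exact hz x hx hxz
  · refine not_hasMatching_of_inter_nonempty (X := univ.image a)
      ((card_image_le.trans_eq (card_fin (k - 1))).trans_lt (by omega)) fun S hS => ?_
    obtain ⟨⟨j, U⟩, -, rfl⟩ := mem_image.mp hS
    exact ⟨a j, mem_inter.mpr ⟨mem_insert_self _ _, mem_image_of_mem _ (mem_univ j)⟩⟩
  · rw [card_image_of_injOn, card_product, card_univ, Fintype.card_fin,
      card_biUnion_partialTransversals]
    · rfl
    rintro ⟨j, U⟩ hp ⟨j', U'⟩ hp' h
    simp only [coe_product, Set.mem_prod, mem_coe] at hp hp' h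
    have hjj' : a j = a j' := by
      have := h ▸ mem_insert_self (a j) U
      exact (mem_insert.mp this).resolve_right fun h' => (hPT U' hp'.2).2.2 _ h' rfl
    obtain rfl : j = j' := Fin.castLE_injective hkn (eq_of_heq (Sigma.mk.inj_iff.mp hjj').2)
    rw [← erase_insert (ha j U hp.2), h, erase_insert (ha j U' hp'.2)]

def transversal (y : (i : Fin r) → Fin (n i)) : Finset (Vertex r n) :=
  univ.image fun i => ⟨i, y i⟩

lemma mk_mem_transversal {y : (i : Fin r) → Fin (n i)} {i : Fin r} {b : Fin (n i)} :
    ⟨i, b⟩ ∈ transversal y ↔ y i = b := by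
  simp only [transversal, mem_image, mem_univ, true_and]
  constructor
  · rintro ⟨j, hj⟩
    obtain ⟨rfl, h⟩ := Sigma.mk.inj_iff.mp hj
    exact eq_of_heq h
  · rintro rfl
    exact ⟨i, rfl⟩

lemma transversal_injective : Function.Injective (transversal (n := n)) := fun _ _ h =>
  funext fun _ => (mk_mem_transversal.mp (h ▸ mk_mem_transversal.mpr rfl)).symm

lemma exists_transversal_eq {S : Finset (Vertex r n)} (hS : S ∈ crossEdges r r n) :
    ∃ y, transversal y = S := by
  obtain ⟨hcard, hinj⟩ := mem_crossEdges.mp hS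
  have hsurj : S.image Sigma.fst = univ :=
    eq_univ_of_card _ (by rw [card_image_of_injOn hinj, hcard, Fintype.card_fin])
  have hsec : ∀ i, ∃ b : Fin (n i), (⟨i, b⟩ : Vertex r n) ∈ S := by
    intro i
    obtain ⟨⟨j, b⟩, hb, rfl⟩ := mem_image.mp (hsurj ▸ mem_univ i)
    exact ⟨b, hb⟩
  choose y hy using hsec
  refine ⟨y, eq_of_subset_of_card_le (fun x hx => ?_) ?_⟩
  · obtain ⟨i, -, rfl⟩ := mem_image.mp hx
    exact hy i
  · rw [hcard, transversal, card_image_of_injective _ fun i j h => congrArg Sigma.fst h,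
      card_univ, Fintype.card_fin]

/-- As `n 0 ≤ n i`, the offset `y i - y 0` modulo `n i` and either of `y i`, `y 0` determine
the other. -/
def cyclicLabel (hmono : Monotone n) (y : (i : Fin r) → Fin (n i)) (i : tailParts r) :
    Fin (n i) :=
  y i - Fin.castLE (hmono (Nat.zero_le i.1.val : (⟨0, i.1.pos⟩ : Fin r) ≤ i)) (y ⟨0, i.1.pos⟩)

lemma disjoint_transversal_of_cyclicLabel_eq (hmono : Monotone n)
    {y y' : (i : Fin r) → Fin (n i)} (h : cyclicLabel hmono y = cyclicLabel hmono y')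
    (hne : y ≠ y') : Disjoint (transversal y) (transversal y') := by
  refine disjoint_left.mpr fun ⟨i, b⟩ hb hb' => hne ?_
  rw [mk_mem_transversal] at hb hb'
  have hlabel : ∀ j (hj : 0 < j.val), y j - Fin.castLE (hmono (Nat.zero_le j.val)) (y ⟨0, j.pos⟩) =
      y' j - Fin.castLE (hmono (Nat.zero_le j.val)) (y' ⟨0, j.pos⟩) :=
    fun j hj => congrFun h ⟨j, mem_tailParts.mpr hj⟩
  have h0 : y ⟨0, i.pos⟩ = y' ⟨0, i.pos⟩ := by
    rcases Nat.eq_zero_or_pos i.val with hi | hi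
    · rw [show (⟨0, i.pos⟩ : Fin r) = i from Fin.ext hi.symm]
      exact hb.trans hb'.symm
    · have : NeZero (n i) := ⟨(y i).pos.ne'⟩
      have := hlabel i hi
      rw [hb, hb', sub_right_inj] at this
      exact Fin.castLE_injective _ this
  funext j
  rcases Nat.eq_zero_or_pos j.val with hj | hj
  · rw [show j = ⟨0, i.pos⟩ from Fin.ext hj]
    exact h0
  · have : NeZero (n j) := ⟨(y j).pos.ne'⟩
    simpa [h0] using hlabel j hj

lemma card_le_of_not_hasMatching_transversal (hmono : Monotone n) {k : ℕ}
    {H : Finset (Finset (Vertex r n))} (hH : H ⊆ crossEdges r r n) (hno : ¬ hasMatching H k) :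
    H.card ≤ (k - 1) * esymmTail r n (r - 1) := by
  set Y := univ.filter fun y => transversal (n := n) y ∈ H
  have hfiber : ∀ b ∈ Y.image (cyclicLabel hmono),
      (Y.filter fun y => cyclicLabel hmono y = b).card ≤ k - 1 := by
    intro b _
    by_contra! hk
    obtain ⟨N, hNY, hNk⟩ :=
      exists_subset_card_eq (s := Y.filter fun y => cyclicLabel hmono y = b) (n := k) (by omega)
    refine hno ⟨N.image transversal, fun S hS => ?_, ?_, ?_⟩
    · obtain ⟨y, hy, rfl⟩ := mem_image.mp hS
      exact (mem_filter.mp (mem_filter.mp (hNY hy)).1).2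
    · rw [card_image_of_injective _ transversal_injective, hNk]
    · simp only [coe_image]
      rintro _ ⟨y, hy, rfl⟩ _ ⟨y', hy', rfl⟩ hne
      refine disjoint_transversal_of_cyclicLabel_eq hmono ?_ fun h => hne (h ▸ rfl)
      exact (mem_filter.mp (hNY hy)).2.trans (mem_filter.mp (hNY hy')).2.symm
  calc H.card ≤ (Y.image transversal).card := card_le_card fun S hS => by
        obtain ⟨y, rfl⟩ := exists_transversal_eq (hH hS)
        exact mem_image_of_mem _ (mem_filter.mpr ⟨mem_univ _, hS⟩)
    _ ≤ Y.card := card_image_le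
    _ ≤ (k - 1) * (Y.image (cyclicLabel hmono)).card := card_le_mul_card_image _ _ hfiber
    _ ≤ (k - 1) * Fintype.card ((i : tailParts r) → Fin (n i)) :=
        Nat.mul_le_mul_left _ (card_le_univ _)
    _ = (k - 1) * esymmTail r n (r - 1) := by
        have : esymmTail r n (r - 1) = ∏ i ∈ tailParts r, n i := by
          rw [esymmTail, ← card_tailParts, powersetCard_self, sum_singleton]
        rw [this, Fintype.card_pi]
        simp only [Fintype.card_fin]
        exact congrArg _ (prod_coe_sort _ _)

lemma card_le_of_not_hasMatching_of_lt (hmono : Monotone n) (hs : 2 ≤ s) (hsr : s < r) {k : ℕ}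
    (hn0 : s ^ 3 * k ≤ n ⟨0, by omega⟩) {H : Finset (Finset (Vertex r n))}
    (hH : H ⊆ crossEdges r s n) (hno : ¬ hasMatching H k) :
    H.card ≤ (k - 1) * esymmTail r n (s - 1) := by
  obtain ⟨M, hM⟩ := exists_isMaximumMatching H
  have hMk := hM.card_lt_of_not_hasMatching hno
  have hD : (2 * M.card + 1) * s ^ 2 * esymmTail r n (s - 2) ≤ esymmTail r n (s - 1) := by
    have hdouble := mul_esymmTail_le hmono (by omega : 0 < r) (s - 2)
    rw [show r - 1 - (s - 2) = r - s + 1 by omega, show s - 2 + 1 = s - 1 by omega] at hdouble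
    refine Nat.le_of_mul_le_mul_left ?_ (by omega : 0 < s - 1)
    calc (s - 1) * ((2 * M.card + 1) * s ^ 2 * esymmTail r n (s - 2))
        ≤ 2 * s ^ 3 * k * esymmTail r n (s - 2) := by
          have : (s - 1) * (2 * M.card + 1) ≤ s * (2 * k) :=
            Nat.mul_le_mul (Nat.sub_le s 1) (by omega)
          calc (s - 1) * ((2 * M.card + 1) * s ^ 2 * esymmTail r n (s - 2))
              = (s - 1) * (2 * M.card + 1) * s ^ 2 * esymmTail r n (s - 2) := by ring
            _ ≤ s * (2 * k) * s ^ 2 * esymmTail r n (s - 2) := by gcongr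
            _ = 2 * s ^ 3 * k * esymmTail r n (s - 2) := by ring
      _ ≤ (r - s + 1) * n ⟨0, by omega⟩ * esymmTail r n (s - 2) := by
          rw [mul_assoc 2]
          exact Nat.mul_le_mul_right _ (Nat.mul_le_mul (by omega) hn0)
      _ ≤ (s - 1) * esymmTail r n (s - 1) := by rw [mul_assoc]; exact hdouble
  calc H.card ≤ M.card * esymmTail r n (s - 1) :=
        hM.card_le_card_mul hs (fun f hf => (mem_crossEdges.mp (hH hf)).1)
          (fun v => (card_le_card (filter_subset_filter _ hH)).trans
            (card_filter_mem_crossEdges_le hmono v))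
          (fun v w hvw => (card_le_card (filter_subset_filter _ hH)).trans
            (card_filter_mem_mem_crossEdges_le hmono hvw)) hD
    _ ≤ (k - 1) * esymmTail r n (s - 1) := Nat.mul_le_mul_right _ (by omega)

end CompleteMultipartite

theorem stmt7 (r s k : ℕ) (hs : 2 ≤ s) (hsr : s ≤ r) (hk : 1 ≤ k) (n : Fin r → ℕ)
    (hmono : Monotone n)
    (h1 : s ≤ r - 2 → s ^ 3 * k + s * r ≤ n ⟨0, by omega⟩)
    (h2 : s = r - 1 → s ^ 3 * k ^ 2 + s * r ≤ n ⟨0, by omega⟩)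
    (h3 : s = r → k ≤ n ⟨0, by omega⟩) :
    IsGreatest {m : ℕ | ∃ H ⊆ crossEdges r s n, ¬ hasMatching H k ∧ H.card = m}
      ((k - 1) * ∑ A ∈ (Finset.univ.filter fun i : Fin r => 0 < i.val).powersetCard (s - 1),
        ∏ i ∈ A, n i) := by
  have hr : 0 < r := by omega
  have hn0 : s < r → s ^ 3 * k ≤ n ⟨0, hr⟩ := by
    intro hlt
    rcases Nat.lt_or_ge s (r - 1) with h | h
    · exact le_of_add_le_left (h1 (by omega))
    · exact (Nat.mul_le_mul_left _ (Nat.le_self_pow two_ne_zero k)).trans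
        (le_of_add_le_left (h2 (by omega)))
  have hkn : k - 1 ≤ n ⟨0, hr⟩ := by
    rcases hsr.lt_or_eq with hlt | rfl
    · exact (Nat.sub_le k 1).trans ((Nat.le_mul_of_pos_left k (by positivity)).trans (hn0 hlt))
    · exact (Nat.sub_le k 1).trans (h3 rfl)
  change IsGreatest _ ((k - 1) * esymmTail r n (s - 1))
  refine ⟨exists_not_hasMatching_card_eq hr hk hkn (by omega), ?_⟩
  rintro _ ⟨H, hH, hno, rfl⟩
  rcases hsr.lt_or_eq with hlt | rfl
  · exact card_le_of_not_hasMatching_of_lt hmono hs hlt (hn0 hlt) hH hno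
  · exact card_le_of_not_hasMatching_transversal hmono hH hno
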